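/- arXiv:1605.08905 — 3 statements merged into one kernel-verified Lean document; each statement's English description precedes it below -/
import Mathlib

section
/- If G is an oriented graph with directed girth at least k+1, then there is a bijection between the k-dipath t-colourings of G and the proper t-colourings of the simple graph G^k, where V(G^k) = V(G) and uv ∈ E(G^k) iff 0 < d_weak(u,v) ≤ k. -/
/-- A directed walk of length `n` in the digraph with arc relation `A`,
given as a function `p : ℕ → V` (only indices `0..n` matter). -/
def IsDiwalk {V : Type*} (A : V → V → Prop) (n : ℕ) (p : ℕ → V) : Prop :=
  ∀ i < n, A (p i) (p (i+1))

/-- A directed path of length `n`: a directed walk whose vertices `p 0, …, p n`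
are pairwise distinct. -/
def IsDipath {V : Type*} (A : V → V → Prop) (n : ℕ) (p : ℕ → V) : Prop :=
  IsDiwalk A n p ∧ ∀ i ≤ n, ∀ j ≤ n, p i = p j → i = j

/-- A directed cycle of length `n`: a directed walk with `p 0 = p n` whose
vertices `p 0, …, p (n-1)` are pairwise distinct. -/
def IsDicycle {V : Type*} (A : V → V → Prop) (n : ℕ) (p : ℕ → V) : Prop :=
  IsDiwalk A n p ∧ p 0 = p n ∧ ∀ i < n, ∀ j < n, p i = p j → i = j

/-- A digraph is acyclic if it has no directed cycle of positive length. -/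
def Acyclic {V : Type*} (A : V → V → Prop) : Prop :=
  ∀ n, 0 < n → ∀ p : ℕ → V, ¬ IsDicycle A n p

/-- Directed girth at least `g`: no directed cycle of length less than `g`. -/
def GirthAtLeast {V : Type*} (A : V → V → Prop) (g : ℕ) : Prop :=
  ∀ n, 0 < n → n < g → ∀ p : ℕ → V, ¬ IsDicycle A n p

/-- An oriented graph: a loopless digraph with no digons. -/
def Oriented {V : Type*} (A : V → V → Prop) : Prop :=
  (∀ x, ¬ A x x) ∧ ∀ x y, A x y → ¬ A y x

/-- A `k`-dipath `t`-colouring: vertices joined by a directed path of length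
at most `k` (and at least 1) receive different colours. -/
def IsDipathColoring {V : Type*} (A : V → V → Prop) (k : ℕ) {t : ℕ} (c : V → Fin t) : Prop :=
  ∀ ℓ, 0 < ℓ → ℓ ≤ k → ∀ p : ℕ → V, IsDipath A ℓ p → c (p 0) ≠ c (p ℓ)

/-- The `k`-dipath chromatic number. -/
noncomputable def dipChrom {V : Type*} (A : V → V → Prop) (k : ℕ) : ℕ :=
  sInf {t | ∃ c : V → Fin t, IsDipathColoring A k c}

/-- A homomorphism of digraphs. -/
def DiHom {V W : Type*} (A : V → V → Prop) (B : W → W → Prop) (φ : V → W) : Prop :=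
  ∀ x y, A x y → B (φ x) (φ y)

/-- The transitive tournament on `t` vertices. -/
def transTour (t : ℕ) : Fin t → Fin t → Prop := fun i j => i < j

/-- The oriented chromatic number: the least `t` such that there is a
homomorphism to some oriented graph on `t` vertices. -/
noncomputable def oChrom {V : Type*} (A : V → V → Prop) : ℕ :=
  sInf {t | ∃ B : Fin t → Fin t → Prop, Oriented B ∧ ∃ φ : V → Fin t, DiHom A B φ}

/-- Weak distance at most `k`: a directed walk of length at most `k`
from `x` to `y` or from `y` to `x`. -/
def WeakDistLE {V : Type*} (A : V → V → Prop) (k : ℕ) (x y : V) : Prop :=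
  ∃ ℓ ≤ k, ∃ p : ℕ → V, IsDiwalk A ℓ p ∧ ((p 0 = x ∧ p ℓ = y) ∨ (p 0 = y ∧ p ℓ = x))

/-- The directed cycle of length `m`. -/
def dicycleRel (m : ℕ) : Fin m → Fin m → Prop := fun i j => j.val = (i.val + 1) % m

/-- The directed path on `m+1` vertices (length `m`). -/
def dipathRel (m : ℕ) : Fin (m+1) → Fin (m+1) → Prop := fun i j => i.val + 1 = j.val

/-! A directed walk of length `ℓ ≤ k` that revisits a vertex contains a closed subwalk of length
at most `k`, and a shortest closed subwalk is a directed cycle; so under directed girth `k + 1`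
every short walk is a path. Hence "joined by a directed path of length at most `k`" and
"at weak distance between `1` and `k`" are the same relation, and the two colouring conditions
coincide on every map `V → Fin t`. -/

section

variable {V : Type*} {A : V → V → Prop}

lemma IsDiwalk.shift {n m i : ℕ} {p : ℕ → V} (hp : IsDiwalk A n p) (h : i + m ≤ n) :
    IsDiwalk A m (fun j => p (i + j)) :=
  fun j hj => hp (i + j) (by omega)

lemma IsDipath.apply_zero_ne {ℓ : ℕ} {p : ℕ → V} (hp : IsDipath A ℓ p) (hℓ : 0 < ℓ) :
    p 0 ≠ p ℓ :=
  fun h => hℓ.ne (hp.2 0 ℓ.zero_le ℓ le_rfl h)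

lemma exists_isDicycle_of_isDiwalk {n : ℕ} {p : ℕ → V} (hp : IsDiwalk A n p) (hn : 0 < n)
    (hclosed : p 0 = p n) : ∃ m, 0 < m ∧ m ≤ n ∧ ∃ q, IsDicycle A m q := by
  induction n using Nat.strong_induction_on generalizing p with
  | _ n ih =>
    by_cases hinj : ∀ i < n, ∀ j < n, p i = p j → i = j
    · exact ⟨n, hn, le_rfl, p, hp, hclosed, hinj⟩
    push Not at hinj
    obtain ⟨i, hi, j, hj, hpij, hij⟩ := hinj
    wlog hlt : i < j generalizing i j
    · exact this j hj i hi hpij.symm hij.symm (by omega)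
    obtain ⟨m, hm, hmle, q, hq⟩ :=
      ih (j - i) (by omega) (hp.shift (i := i) (by omega)) (by omega)
        (by simpa [Nat.add_sub_cancel' hlt.le] using hpij)
    exact ⟨m, hm, by omega, q, hq⟩

lemma GirthAtLeast.isDipath {k ℓ : ℕ} {p : ℕ → V} (hg : GirthAtLeast A (k + 1)) (hℓ : ℓ ≤ k)
    (hp : IsDiwalk A ℓ p) : IsDipath A ℓ p := by
  refine ⟨hp, fun i hi j hj hpij => ?_⟩
  by_contra hij
  wlog hlt : i < j generalizing i j
  · exact this j hj i hi hpij.symm (Ne.symm hij) (by omega)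
  obtain ⟨m, hm, hmle, q, hq⟩ := exists_isDicycle_of_isDiwalk (hp.shift (i := i) (m := j - i)
    (by omega)) (by omega) (by simpa [Nat.add_sub_cancel' hlt.le] using hpij)
  exact hg m hm (by omega) q hq

lemma GirthAtLeast.isDipathColoring_iff {k t : ℕ} (hg : GirthAtLeast A (k + 1)) (c : V → Fin t) :
    IsDipathColoring A k c ↔ ∀ u v, u ≠ v → WeakDistLE A k u v → c u ≠ c v := by
  constructor
  · rintro hc u v huv ⟨ℓ, hℓk, p, hp, hends⟩
    have hℓ : 0 < ℓ := Nat.pos_of_ne_zero <| by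
      rintro rfl
      rcases hends with ⟨rfl, rfl⟩ | ⟨rfl, rfl⟩ <;> exact huv rfl
    have hcp := hc ℓ hℓ hℓk p (hg.isDipath hℓk hp)
    rcases hends with ⟨rfl, rfl⟩ | ⟨rfl, rfl⟩
    · exact hcp
    · exact hcp.symm
  · intro hc ℓ hℓ hℓk p hp
    exact hc _ _ (hp.apply_zero_ne hℓ) ⟨ℓ, hℓk, p, hp.1, .inl ⟨rfl, rfl⟩⟩

end

theorem stmt4_general {V : Type*} (A : V → V → Prop) (k t : ℕ)
    (hg : GirthAtLeast A (k + 1)) :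
    Nonempty ({c : V → Fin t // IsDipathColoring A k c} ≃
      {c : V → Fin t // ∀ u v : V, u ≠ v → WeakDistLE A k u v → c u ≠ c v}) :=
  ⟨Equiv.subtypeEquivRight hg.isDipathColoring_iff⟩

/-- for an oriented graph of directed girth at least `k+1`,
there is a bijection between `k`-dipath `t`-colourings of `G` and proper
`t`-colourings of the simple graph `G^k`. -/
theorem stmt4 {V : Type*} (A : V → V → Prop) (k t : ℕ)
    (hor : Oriented A) (hg : GirthAtLeast A (k + 1)) :
    Nonempty ({c : V → Fin t // IsDipathColoring A k c} ≃
      {c : V → Fin t // ∀ u v : V, u ≠ v → WeakDistLE A k u v → c u ≠ c v}) :=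
  stmt4_general A k t hg
end

section
/- The directed path on 4 vertices has oriented chromatic number 3 but 4-dipath chromatic number 4. -/
/- Lower bounds: a homomorphism into an oriented graph is injective on every directed path of
length 2 (looplessness separates consecutive vertices, the absence of digons separates the ends),
so it needs at least 3 colours; and in a directed path every two vertices are joined by a directed
subpath, so a dipath colouring of distance at least its length is injective. Upper bounds: wrapping
the path around the directed triangle, and the identity colouring. -/

open Function

lemma Oriented.three_le_card_of_diHom {V W : Type*} [Fintype W] {A : V → V → Prop}
    {B : W → W → Prop} (hB : Oriented B) {φ : V → W} (hφ : DiHom A B φ) {x y z : V}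
    (hxy : A x y) (hyz : A y z) : 3 ≤ Fintype.card W := by
  classical
  have hxy' := hφ x y hxy
  have hyz' := hφ y z hyz
  have hne₁ : φ x ≠ φ y := fun h => hB.1 _ (h ▸ hxy')
  have hne₂ : φ y ≠ φ z := fun h => hB.1 _ (h ▸ hyz')
  have hne₃ : φ x ≠ φ z := fun h => hB.2 _ _ hxy' (h ▸ hyz')
  calc 3 = ({φ x, φ y, φ z} : Finset W).card :=
        (Finset.card_eq_three.mpr ⟨_, _, _, hne₁, hne₃, hne₂, rfl⟩).symm
    _ ≤ Fintype.card W := Finset.card_le_univ _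

lemma dicycleRel_iff {m : ℕ} {i j : Fin m} :
    dicycleRel m i j ↔ j.val = i.val + 1 ∨ (i.val + 1 = m ∧ j.val = 0) := by
  unfold dicycleRel
  rcases Nat.lt_or_ge (i.val + 1) m with h | h
  · rw [Nat.mod_eq_of_lt h]; omega
  · rw [show i.val + 1 = m by omega, Nat.mod_self]; omega

lemma oriented_dicycleRel {m : ℕ} (hm : 3 ≤ m) : Oriented (dicycleRel m) := by
  refine ⟨fun x hx => ?_, fun x y hxy hyx => ?_⟩
  · rw [dicycleRel_iff] at hx; omega
  · rw [dicycleRel_iff] at hxy hyx; omega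

lemma diHom_dipathRel_dicycleRel (n : ℕ) {m : ℕ} (hm : 0 < m) :
    DiHom (dipathRel n) (dicycleRel m) (fun i => ⟨i.val % m, Nat.mod_lt _ hm⟩) := by
  intro i j hij
  simp only [dicycleRel, ← hij.symm, Nat.mod_add_mod]

theorem oChrom_dipathRel {m : ℕ} (hm : 2 ≤ m) : oChrom (dipathRel m) = 3 := by
  refine IsLeast.csInf_eq ⟨⟨dicycleRel 3, oriented_dicycleRel le_rfl, _,
    diHom_dipathRel_dicycleRel m three_pos⟩, ?_⟩
  rintro t ⟨B, hB, φ, hφ⟩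
  simpa using hB.three_le_card_of_diHom hφ (x := ⟨0, by omega⟩) (y := ⟨1, by omega⟩)
    (z := ⟨2, by omega⟩) rfl rfl

lemma isDipathColoring_of_injective {V : Type*} (A : V → V → Prop) (k : ℕ) {t : ℕ}
    {c : V → Fin t} (hc : Injective c) : IsDipathColoring A k c :=
  fun _ hℓ _ _ hp h => hℓ.ne (hp.2 0 (Nat.zero_le _) _ le_rfl (hc h))

/-- The directed path in `dipathRel m` starting at `i`, stalled at the last vertex `m`. -/
def dipathFrom {m : ℕ} (i : Fin (m + 1)) (k : ℕ) : Fin (m + 1) :=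
  ⟨min (i.val + k) m, by omega⟩

lemma isDipath_dipathFrom {m : ℕ} {i j : Fin (m + 1)} (hij : i ≤ j) :
    IsDipath (dipathRel m) (j.val - i.val) (dipathFrom i) := by
  have := j.isLt
  refine ⟨fun k hk => ?_, fun a ha b hb h => ?_⟩
  · simp only [dipathRel, dipathFrom, Fin.le_def] at hij ⊢; omega
  · have := congrArg Fin.val h
    simp only [dipathFrom, Fin.le_def] at this hij; omega

lemma dipathFrom_zero {m : ℕ} (i : Fin (m + 1)) : dipathFrom i 0 = i :=
  Fin.ext (by simp only [dipathFrom]; omega)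

lemma dipathFrom_sub {m : ℕ} {i j : Fin (m + 1)} (hij : i ≤ j) :
    dipathFrom i (j.val - i.val) = j :=
  Fin.ext (by simp only [dipathFrom, Fin.le_def] at hij ⊢; omega)

lemma IsDipathColoring.injective_of_dipathRel {m k t : ℕ} {c : Fin (m + 1) → Fin t}
    (hc : IsDipathColoring (dipathRel m) k c) (hk : m ≤ k) : Injective c := by
  have hlt : ∀ i j : Fin (m + 1), i < j → c i ≠ c j := fun i j hij => by
    have := j.isLt
    have h := hc (j.val - i.val) (by omega) (by omega) _ (isDipath_dipathFrom hij.le)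
    rwa [dipathFrom_zero, dipathFrom_sub hij.le] at h
  intro i j h
  by_contra hne
  rcases lt_or_gt_of_ne hne with hij | hji
  · exact hlt i j hij h
  · exact hlt j i hji h.symm

theorem dipChrom_dipathRel {m k : ℕ} (hk : m ≤ k) : dipChrom (dipathRel m) k = m + 1 := by
  refine IsLeast.csInf_eq ⟨⟨id, isDipathColoring_of_injective _ _ injective_id⟩, ?_⟩
  rintro t ⟨c, hc⟩
  simpa using Fintype.card_le_of_injective c (hc.injective_of_dipathRel hk)

/-- the directed path on 4 vertices has oriented chromatic
number 3 and 4-dipath chromatic number 4. -/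
theorem stmt14 : oChrom (dipathRel 3) = 3 ∧ dipChrom (dipathRel 3) 4 = 4 :=
  ⟨oChrom_dipathRel (by norm_num), dipChrom_dipathRel (by norm_num)⟩
end

section
/- Let k ≥ 3 and t > k, and let H be the oriented graph constructed from a simple graph G as in the standard reduction (with v_in, v_out, a transitive tournament on t−k+1 vertices, and connecting paths for each vertex v, and arc u_out → v_in for each arc of an acyclic orientation of G). Then G is t-colourable if and only if H has a k-dipath t-colouring. -/
/-- The oriented graph `H_{k,t}` built from an (acyclically oriented) graph
with arc relation `E`.  For each vertex `v`, index `0` is `v_out`, indices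
`1, …, t-k+1` form a transitive tournament (with source `s_v = 1` and sink
`t_v = t-k+1`), indices `t-k+2, …, t-1` are the path vertices
`v´_1, …, v´_{k-2}`, and index `t` is `v_in`; the path
`t_v, v´_1, …, v´_{k-2}, v_in` has length `k-1`, and there is an arc
`v_out → s_v`.  For each arc `uv` of `E` there is an arc `u_out → v_in`. -/
def Hrel {V : Type*} (E : V → V → Prop) (k t : ℕ) :
    V × Fin (t + 1) → V × Fin (t + 1) → Prop :=
  fun a b =>
    (a.1 = b.1 ∧
      ((1 ≤ a.2.val ∧ a.2.val < b.2.val ∧ b.2.val ≤ t - k + 1) ∨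
       (t - k + 1 ≤ a.2.val ∧ a.2.val ≤ t - 1 ∧ b.2.val = a.2.val + 1) ∨
       (a.2.val = 0 ∧ b.2.val = 1))) ∨
    (E a.1 b.1 ∧ a.2.val = 0 ∧ b.2.val = t)


/-!
Every arc of `H` raises the index in `Fin (t + 1)`, so every diwalk of `H` is a dipath.
Given a proper colouring `f`, colour `(v, i)` by `f v + i mod t`: inside a gadget only `v_out` and
`v_in` get equal colours, and they are `k + 1` apart, while an arc `u_out → v_in` sees the colours
`f u ≠ f v`. Conversely, in a `k`-dipath colouring the `t` vertices `s_v, …, v_in` pairwise clash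
and `v_out` clashes with all of them but `v_in`, so `v_out` and `v_in` share a colour; colouring
`v` like `v_in` is then proper because of the arcs `u_out → v_in`.
-/

section Walks

variable {V W : Type*} {A : V → V → Prop}

lemma IsDiwalk.strictMonoOn {α : Type*} [Preorder α] {φ : V → α}
    (hφ : ∀ x y, A x y → φ x < φ y) {n : ℕ} {p : ℕ → V} (hp : IsDiwalk A n p) :
    StrictMonoOn (φ ∘ p) (Set.Iic n) :=
  strictMonoOn_Iic_of_lt_succ fun m hm => by
    rw [Order.succ_eq_add_one]
    exact hφ _ _ (hp m hm)

lemma IsDiwalk.isDipath {α : Type*} [Preorder α] {φ : V → α}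
    (hφ : ∀ x y, A x y → φ x < φ y) {n : ℕ} {p : ℕ → V} (hp : IsDiwalk A n p) :
    IsDipath A n p :=
  ⟨hp, fun _ hi _ hj hij => (hp.strictMonoOn hφ).injOn hi hj (congrArg φ hij)⟩

lemma IsDiwalk.le_add {φ : V → ℕ} (hφ : ∀ x y, A x y → φ y ≤ φ x + 1) {n : ℕ}
    {p : ℕ → V} (hp : IsDiwalk A n p) : φ (p n) ≤ φ (p 0) + n := by
  induction n with
  | zero => simp
  | succ n ih =>
    have hstep := hφ _ _ (hp n n.lt_succ_self)
    have hprefix := ih fun i hi => hp i (by omega)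
    omega

lemma IsDiwalk.apply_eq {g : V → W} (hg : ∀ x y, A x y → g x = g y) {n : ℕ}
    {p : ℕ → V} (hp : IsDiwalk A n p) : g (p n) = g (p 0) := by
  induction n with
  | zero => rfl
  | succ n ih => exact (hg _ _ (hp n n.lt_succ_self)).symm.trans (ih fun i hi => hp i (by omega))

def DiReach (A : V → V → Prop) (n : ℕ) (x y : V) : Prop :=
  ∃ p : ℕ → V, IsDiwalk A n p ∧ p 0 = x ∧ p n = y

lemma DiReach.refl (x : V) : DiReach A 0 x x :=
  ⟨fun _ => x, fun _ hi => absurd hi (Nat.not_lt_zero _), rfl, rfl⟩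

lemma DiReach.snoc {n : ℕ} {x y z : V} (h : DiReach A n x y) (hyz : A y z) :
    DiReach A (n + 1) x z := by
  obtain ⟨p, hp, rfl, rfl⟩ := h
  refine ⟨Function.update p (n + 1) z, fun i hi => ?_, by simp, by simp⟩
  rcases Nat.lt_succ_iff_lt_or_eq.1 hi with hi | rfl
  · rw [Function.update_of_ne (by omega), Function.update_of_ne (by omega)]
    exact hp i hi
  · simpa [Function.update_of_ne (Nat.succ_ne_self i)] using hyz

lemma DiReach.map {B : W → W → Prop} {φ : V → W} (hφ : DiHom A B φ) {n : ℕ} {x y : V}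
    (h : DiReach A n x y) : DiReach B n (φ x) (φ y) := by
  obtain ⟨p, hp, rfl, rfl⟩ := h
  exact ⟨φ ∘ p, fun i hi => hφ _ _ (hp i hi), rfl, rfl⟩

lemma IsDipathColoring.apply_ne_of_diReach {k t ℓ : ℕ} {c : V → Fin t}
    (hc : IsDipathColoring A k c) {α : Type*} [Preorder α] {φ : V → α}
    (hφ : ∀ x y, A x y → φ x < φ y) {x y : V} (h : DiReach A ℓ x y) (hℓ : 0 < ℓ)
    (hℓk : ℓ ≤ k) : c x ≠ c y := by
  obtain ⟨p, hp, rfl, rfl⟩ := h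
  exact hc ℓ hℓ hℓk p (hp.isDipath hφ)

end Walks

def gadgetArc (k t : ℕ) (i j : Fin (t + 1)) : Prop :=
  (1 ≤ i.val ∧ i.val < j.val ∧ j.val ≤ t - k + 1) ∨
    (t - k + 1 ≤ i.val ∧ i.val ≤ t - 1 ∧ j.val = i.val + 1) ∨
    (i.val = 0 ∧ j.val = 1)

/-- The length of a shortest dipath from `v_out` (index `0`) to index `i` inside a gadget. -/
def gadgetLevel (k t i : ℕ) : ℕ :=
  if i ≤ t - k + 1 then min i 2 else i + k + 1 - t

section Gadget

variable {k t : ℕ}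

lemma gadgetLevel_le_succ (hkt : k < t) {i j : Fin (t + 1)} (h : gadgetArc k t i j) :
    gadgetLevel k t j ≤ gadgetLevel k t i + 1 := by
  unfold gadgetLevel gadgetArc at *
  split_ifs <;> omega

/-- The bound is the level of `b` when starting from `v_out`, and one less from any other vertex. -/
lemma gadgetArc_diReach (hkt : k < t) (b : Fin (t + 1)) :
    ∀ a < b, ∃ ℓ, 1 ≤ ℓ ∧ ℓ + min a.val 1 ≤ gadgetLevel k t b ∧
      DiReach (gadgetArc k t) ℓ a b := by
  induction b using Fin.induction with
  | zero => exact fun a ha => absurd ha (Fin.not_lt_zero a)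
  | succ i ih =>
    intro a ha
    rw [Fin.lt_def, Fin.val_succ] at ha
    by_cases hi : i.val + 1 ≤ t - k + 1
    · have hlev : gadgetLevel k t i.succ = min (i.val + 1) 2 := by
        simp [gadgetLevel, hi]
      rcases Nat.eq_zero_or_pos a.val with ha0 | ha0
      · by_cases hi0 : i.val = 0
        · refine ⟨1, le_rfl, by omega, (DiReach.refl a).snoc ?_⟩
          exact Or.inr (Or.inr ⟨ha0, by simp [hi0]⟩)
        · let one : Fin (t + 1) := ⟨1, by omega⟩
          refine ⟨2, by omega, by omega, ((DiReach.refl a).snoc (z := one) ?_).snoc ?_⟩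
          · exact Or.inr (Or.inr ⟨ha0, rfl⟩)
          · exact Or.inl ⟨le_rfl, by simp only [one, Fin.val_succ]; omega,
              by simp only [Fin.val_succ]; omega⟩
      · refine ⟨1, le_rfl, by omega, (DiReach.refl a).snoc (Or.inl ⟨ha0, ?_, ?_⟩)⟩ <;>
          simp only [Fin.val_succ] <;> omega
    · have hlev : gadgetLevel k t i.succ = gadgetLevel k t i.castSucc + 1 := by
        simp only [gadgetLevel, Fin.val_succ, Fin.val_castSucc]
        split_ifs <;> omega
      have harc : gadgetArc k t i.castSucc i.succ :=
        Or.inr (Or.inl ⟨by simp; omega, by simp; omega, by simp⟩)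
      rcases Nat.lt_succ_iff_lt_or_eq.1 ha with ha | ha
      · obtain ⟨ℓ, hℓ, hℓlev, hr⟩ := ih a (Fin.lt_def.2 ha)
        exact ⟨ℓ + 1, by omega, by omega, hr.snoc harc⟩
      · have hai : a = i.castSucc := Fin.ext ha
        subst hai
        refine ⟨1, le_rfl, ?_, (DiReach.refl _).snoc harc⟩
        simp only [gadgetLevel, Fin.val_succ] at hi ⊢
        split_ifs
        omega

end Gadget

section Hrel

variable {V : Type*} {E : V → V → Prop} {k t : ℕ}

lemma hrel_snd_lt (ht : 0 < t) {a b : V × Fin (t + 1)} (h : Hrel E k t a b) : a.2 < b.2 := by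
  rw [Fin.lt_def]
  rcases h with ⟨-, h⟩ | ⟨-, h0, h1⟩ <;> omega

lemma hrel_of_one_le {a b : V × Fin (t + 1)} (h : Hrel E k t a b) (ha : 1 ≤ a.2.val) :
    a.1 = b.1 ∧ gadgetArc k t a.2 b.2 := by
  rcases h with h | ⟨-, h0, -⟩
  · exact h
  · omega

lemma IsDiwalk.snd_zero_lt (ht : 0 < t) {n : ℕ} {p : ℕ → V × Fin (t + 1)}
    (hp : IsDiwalk (Hrel E k t) n p) {i : ℕ} (hi0 : 0 < i) (hi : i ≤ n) : (p 0).2 < (p i).2 :=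
  hp.strictMonoOn (φ := Prod.snd) (fun _ _ => hrel_snd_lt ht) (Nat.zero_le n) hi hi0

lemma IsDiwalk.gadgetArc_of_head (ht : 0 < t) {n : ℕ} {p : ℕ → V × Fin (t + 1)}
    (hp : IsDiwalk (Hrel E k t) n p) (hhead : (p 0).1 = (p 1).1 ∧ gadgetArc k t (p 0).2 (p 1).2) :
    IsDiwalk (fun a b => a.1 = b.1 ∧ gadgetArc k t a.2 b.2) n p := by
  intro i hi
  rcases Nat.eq_zero_or_pos i with rfl | hi0
  · exact hhead
  · exact hrel_of_one_le (hp i hi) (Nat.one_le_of_lt (hp.snd_zero_lt ht hi0 hi.le))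

lemma diHom_gadgetArc_hrel (v : V) : DiHom (gadgetArc k t) (Hrel E k t) (Prod.mk v) :=
  fun _ _ h => Or.inl ⟨rfl, h⟩

end Hrel

def shiftColoring {V : Type*} {t : ℕ} (f : V → Fin t) (x : V × Fin (t + 1)) : Fin t :=
  ⟨(f x.1 + x.2) % t, Nat.mod_lt _ (f x.1).pos⟩

lemma eq_zero_and_eq_of_add_mod_eq {a i j t : ℕ} (hij : i < j) (hj : j ≤ t)
    (h : (a + i) % t = (a + j) % t) : i = 0 ∧ j = t := by
  have hdvd : t ∣ j - i := (Nat.modEq_iff_dvd' hij.le).1 (Nat.ModEq.add_left_cancel' a h)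
  have := Nat.le_of_dvd (by omega) hdvd
  omega

section Coloring

variable {V : Type*} {E : V → V → Prop} {k t : ℕ}

lemma isDipathColoring_shiftColoring (hk : 2 ≤ k) (hkt : k < t) {f : V → Fin t}
    (hf : ∀ u v, E u v → f u ≠ f v) : IsDipathColoring (Hrel E k t) k (shiftColoring f) := by
  have ht : 0 < t := by omega
  intro ℓ hℓ hℓk p hp heq
  replace heq := congrArg Fin.val heq
  simp only [shiftColoring] at heq
  rcases hp.1 0 hℓ with hfirst | ⟨huv, h0, h1⟩
  · have hgadget := hp.1.gadgetArc_of_head ht hfirst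
    have hfst : (p ℓ).1 = (p 0).1 := hgadget.apply_eq fun _ _ h => h.1
    have hlevel : gadgetLevel k t (p ℓ).2 ≤ gadgetLevel k t (p 0).2 + ℓ :=
      hgadget.le_add fun _ _ h => gadgetLevel_le_succ hkt h.2
    rw [hfst] at heq
    obtain ⟨hi, hj⟩ := eq_zero_and_eq_of_add_mod_eq (hp.1.snd_zero_lt ht hℓ le_rfl)
      (p ℓ).2.is_le heq
    rw [hi, hj] at hlevel
    simp only [gadgetLevel] at hlevel
    split_ifs at hlevel <;> omega
  · -- no arc leaves `v_in`
    have hℓ1 : ℓ = 1 := by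
      by_contra hne
      have h12 := Fin.lt_def.1 (hrel_snd_lt ht (hp.1 1 (by omega)))
      have h2 := (p 2).2.is_le
      simp only [zero_add] at h1 h12
      omega
    subst hℓ1
    rw [zero_add] at huv h1
    rw [h0, h1, Nat.add_zero, Nat.add_mod_right, Nat.mod_eq_of_lt (f _).isLt,
      Nat.mod_eq_of_lt (f _).isLt] at heq
    exact hf _ _ huv (Fin.ext heq)

lemma IsDipathColoring.apply_ne_of_lt (hk : 2 ≤ k) (hkt : k < t) {c : V × Fin (t + 1) → Fin t}
    (hc : IsDipathColoring (Hrel E k t) k c) (v : V) {a b : Fin (t + 1)} (hab : a < b)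
    (hside : 1 ≤ a.val ∨ b.val < t) : c (v, a) ≠ c (v, b) := by
  obtain ⟨ℓ, hℓ, hℓlevel, hr⟩ := gadgetArc_diReach hkt b a hab
  refine hc.apply_ne_of_diReach (fun _ _ => hrel_snd_lt (by omega))
    (hr.map (diHom_gadgetArc_hrel v)) hℓ ?_
  have := b.is_le
  simp only [gadgetLevel] at hℓlevel
  split_ifs at hℓlevel <;> omega

lemma IsDipathColoring.apply_zero_eq_apply_last (hk : 2 ≤ k) (hkt : k < t)
    {c : V × Fin (t + 1) → Fin t} (hc : IsDipathColoring (Hrel E k t) k c) (v : V) :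
    c (v, 0) = c (v, Fin.last t) := by
  have hinj : Function.Injective fun j : Fin t => c (v, j.succ) := by
    intro i j hij
    by_contra hne
    rcases lt_or_gt_of_ne hne with h | h
    · exact hc.apply_ne_of_lt hk hkt v (Fin.succ_lt_succ_iff.2 h) (Or.inl (by simp)) hij
    · exact hc.apply_ne_of_lt hk hkt v (Fin.succ_lt_succ_iff.2 h) (Or.inl (by simp)) hij.symm
  obtain ⟨j, hj⟩ := Finite.injective_iff_surjective.1 hinj (c (v, 0))
  by_cases hlast : j.succ = Fin.last t
  · rw [← hj, ← hlast]
  · have hlt : j.succ.val < t := by simpa using Fin.val_lt_last hlast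
    exact absurd hj.symm (hc.apply_ne_of_lt hk hkt v (Fin.succ_pos j) (Or.inr hlt))

lemma IsDipathColoring.apply_last_ne (hk : 2 ≤ k) (hkt : k < t) {c : V × Fin (t + 1) → Fin t}
    (hc : IsDipathColoring (Hrel E k t) k c) {u v : V} (huv : E u v) :
    c (u, Fin.last t) ≠ c (v, Fin.last t) := by
  rw [← hc.apply_zero_eq_apply_last hk hkt u]
  have harc : Hrel E k t (u, 0) (v, Fin.last t) := Or.inr ⟨huv, rfl, rfl⟩
  exact hc.apply_ne_of_diReach (fun _ _ => hrel_snd_lt (by omega)) ((DiReach.refl _).snoc harc)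
    Nat.one_pos (by omega)

end Coloring

theorem stmt17_general {V : Type*} (k t : ℕ) (hk : 3 ≤ k) (ht : k < t)
    (Gadj : V → V → Prop)
    (E : V → V → Prop)
    (horient : ∀ u v, Gadj u v ↔ (E u v ∨ E v u)) :
    (∃ f : V → Fin t, ∀ u v, Gadj u v → f u ≠ f v) ↔
      ∃ c : V × Fin (t + 1) → Fin t, IsDipathColoring (Hrel E k t) k c := by
  have hk2 : 2 ≤ k := by omega
  constructor
  · rintro ⟨f, hf⟩
    exact ⟨shiftColoring f, isDipathColoring_shiftColoring hk2 ht
      fun u v huv => hf u v ((horient u v).2 (Or.inl huv))⟩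
  · rintro ⟨c, hc⟩
    refine ⟨fun v => c (v, Fin.last t), fun u v huv => ?_⟩
    rcases (horient u v).1 huv with h | h
    · exact hc.apply_last_ne hk2 ht h
    · exact (hc.apply_last_ne hk2 ht h).symm

/-- for `t > k ≥ 3` and an acyclic orientation `E` of a simple
graph `Gadj`, the graph `Gadj` is `t`-colourable iff `H_{k,t}` has a
`k`-dipath `t`-colouring. -/
theorem stmt17 {V : Type*} (k t : ℕ) (hk : 3 ≤ k) (ht : k < t)
    (Gadj : V → V → Prop) (hsym : Symmetric Gadj) (hirr : Irreflexive Gadj)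
    (E : V → V → Prop) (hE : Acyclic E)
    (horient : ∀ u v, Gadj u v ↔ (E u v ∨ E v u)) :
    (∃ f : V → Fin t, ∀ u v, Gadj u v → f u ≠ f v) ↔
      ∃ c : V × Fin (t + 1) → Fin t, IsDipathColoring (Hrel E k t) k c :=
  stmt17_general k t hk ht Gadj E horient
end
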